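/- arXiv:2112.13279 — 5 statements merged into one kernel-verified Lean document; each statement's English description precedes it below -/
import Mathlib

section
/- Let ℏ > 0, let V : ℝ → ℝ be C^∞ and let ψ : ℝ → ℂ be C^∞. Then for every x ∈ ℝ, the triple commutator [A,[B,[B,A]]] satisfies ([A,[B,[B,A]]]ψ)(x) = ( (V''(x))² + V'(x)·V'''(x) )·ψ(x) + 2·V'(x)·V''(x)·ψ'(x). In particular, all powers of ℏ cancel, so [A,[B,[B,A]]]ψ is independent of ℏ (it is O(1) in ℏ). -/
open scoped ContDiff


/-- The semiclassical kinetic energy operator `(Aψ)(x) = −(ℏ/2)·ψ''(x)`. -/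
noncomputable def Aop (ℏ : ℝ) (ψ : ℝ → ℂ) : ℝ → ℂ :=
  fun x => -((ℏ : ℂ) / 2) * iteratedDeriv 2 ψ x

/-- The rescaled potential operator `(Bψ)(x) = ℏ⁻¹·V(x)·ψ(x)`. -/
noncomputable def Bop (ℏ : ℝ) (V : ℝ → ℝ) (ψ : ℝ → ℂ) : ℝ → ℂ :=
  fun x => (ℏ : ℂ)⁻¹ * (V x : ℂ) * ψ x

/-- The commutator of two operators on functions: `[S,T]ψ = S(Tψ) − T(Sψ)`. -/
def commOp (S T : (ℝ → ℂ) → (ℝ → ℂ)) : (ℝ → ℂ) → (ℝ → ℂ) :=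
  fun ψ x => S (T ψ) x - T (S ψ) x

private lemma one_le_inf : (1 : WithTop ℕ∞) ≤ ∞ := by
  exact_mod_cast le_top

private lemma sd {f : ℝ → ℂ} (hf : ContDiff ℝ ∞ f) : ContDiff ℝ ∞ (deriv f) :=
  (contDiff_infty_iff_deriv.mp hf).2

private lemma sdR {f : ℝ → ℝ} (hf : ContDiff ℝ ∞ f) : ContDiff ℝ ∞ (deriv f) :=
  (contDiff_infty_iff_deriv.mp hf).2

private lemma i2 (f : ℝ → ℂ) : iteratedDeriv 2 f = deriv (deriv f) := by
  rw [iteratedDeriv_succ, iteratedDeriv_one]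

private lemma si2 {f : ℝ → ℂ} (hf : ContDiff ℝ ∞ f) : ContDiff ℝ ∞ (iteratedDeriv 2 f) := by
  rw [i2]; exact sd (sd hf)

private lemma dmul {f g : ℝ → ℂ} (hf : ContDiff ℝ ∞ f) (hg : ContDiff ℝ ∞ g) :
    deriv (fun t => f t * g t) = fun t => deriv f t * g t + f t * deriv g t := by
  funext t
  exact deriv_fun_mul (hf.differentiable (by simp) t) (hg.differentiable (by simp) t)

private lemma dcmul (c : ℂ) (f : ℝ → ℂ) :
    deriv (fun t => c * f t) = fun t => c * deriv f t :=
  funext fun _ => deriv_const_mul_field c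

private lemma i2cmul (c : ℂ) (f : ℝ → ℂ) :
    iteratedDeriv 2 (fun t => c * f t) = fun t => c * iteratedDeriv 2 f t := by
  rw [i2, dcmul, dcmul, i2]

private lemma i2mul {f g : ℝ → ℂ} (hf : ContDiff ℝ ∞ f) (hg : ContDiff ℝ ∞ g) (x : ℝ) :
    iteratedDeriv 2 (fun t => f t * g t) x =
      iteratedDeriv 2 f x * g x + 2 * deriv f x * deriv g x + f x * iteratedDeriv 2 g x := by
  rw [i2, dmul hf hg]
  have h1 : DifferentiableAt ℝ (fun t => deriv f t * g t) x :=
    (((sd hf).mul hg).differentiable (by simp)) x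
  have h2 : DifferentiableAt ℝ (fun t => f t * deriv g t) x :=
    ((hf.mul (sd hg)).differentiable (by simp)) x
  rw [deriv_fun_add h1 h2,
    deriv_fun_mul ((sd hf).differentiable (by simp) x) (hg.differentiable (by simp) x),
    deriv_fun_mul (hf.differentiable (by simp) x) ((sd hg).differentiable (by simp) x),
    i2 f, i2 g]
  ring

private lemma smoothW {V : ℝ → ℝ} (hV : ContDiff ℝ ∞ V) :
    ContDiff ℝ ∞ (fun t => ((V t : ℝ) : ℂ)) :=
  Complex.ofRealCLM.contDiff.comp hV

private lemma derivW {V : ℝ → ℝ} (hV : ContDiff ℝ ∞ V) :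
    deriv (fun t => ((V t : ℝ) : ℂ)) = fun t => ((deriv V t : ℝ) : ℂ) := by
  funext t
  exact (((hV.differentiable (by simp) t).hasDerivAt).ofReal_comp).deriv

private lemma iterW (n : ℕ) : ∀ (V : ℝ → ℝ), ContDiff ℝ ∞ V →
    iteratedDeriv n (fun t => ((V t : ℝ) : ℂ)) = fun t => ((iteratedDeriv n V t : ℝ) : ℂ) := by
  induction n with
  | zero => intro V hV; simp [iteratedDeriv_zero]
  | succ n ih =>
    intro V hV
    rw [iteratedDeriv_succ', derivW hV, ih (deriv V) (sdR hV)]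
    funext t
    rw [← iteratedDeriv_succ']

private lemma commBA {ℏ : ℝ} (hℏ : (ℏ : ℂ) ≠ 0) {V : ℝ → ℝ} (hV : ContDiff ℝ ∞ V)
    {φ : ℝ → ℂ} (hφ : ContDiff ℝ ∞ φ) :
    commOp (Bop ℏ V) (Aop ℏ) φ =
      fun t => (1/2) * iteratedDeriv 2 (fun s => ((V s : ℝ) : ℂ)) t * φ t
        + deriv (fun s => ((V s : ℝ) : ℂ)) t * deriv φ t := by
  have hW := smoothW hV
  funext t
  have hB : Bop ℏ V φ = fun t => (ℏ : ℂ)⁻¹ * (((V t : ℝ) : ℂ) * φ t) := by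
    funext t; simp [Bop, mul_assoc]
  simp only [commOp, Aop, Bop, hB]
  rw [i2cmul ((ℏ : ℂ)⁻¹) (fun t => ((V t : ℝ) : ℂ) * φ t)]
  beta_reduce
  rw [i2mul hW hφ]
  field_simp
  ring

private lemma commBBA {ℏ : ℝ} (hℏ : (ℏ : ℂ) ≠ 0) {V : ℝ → ℝ} (hV : ContDiff ℝ ∞ V)
    {φ : ℝ → ℂ} (hφ : ContDiff ℝ ∞ φ) :
    commOp (Bop ℏ V) (commOp (Bop ℏ V) (Aop ℏ)) φ =
      fun t => -(ℏ : ℂ)⁻¹ * (deriv (fun s => ((V s : ℝ) : ℂ)) t) ^ 2 * φ t := by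
  have hW := smoothW hV
  have hBφ : Bop ℏ V φ = fun t => (ℏ : ℂ)⁻¹ * (((V t : ℝ) : ℂ) * φ t) := by
    funext t; simp [Bop, mul_assoc]
  have hBφs : ContDiff ℝ ∞ (Bop ℏ V φ) := by
    rw [hBφ]; exact contDiff_const.mul (hW.mul hφ)
  funext t
  show Bop ℏ V (commOp (Bop ℏ V) (Aop ℏ) φ) t - commOp (Bop ℏ V) (Aop ℏ) (Bop ℏ V φ) t = _
  rw [commBA hℏ hV hφ, commBA hℏ hV hBφs]
  simp only [Bop, hBφ]
  rw [dcmul ((ℏ : ℂ)⁻¹) (fun t => ((V t : ℝ) : ℂ) * φ t)]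
  beta_reduce
  rw [dmul hW hφ]
  beta_reduce
  field_simp
  ring

theorem commutator_ABBA (ℏ : ℝ) (hℏ : 0 < ℏ) (V : ℝ → ℝ) (hV : ContDiff ℝ (⊤ : ℕ∞) V)
    (ψ : ℝ → ℂ) (hψ : ContDiff ℝ (⊤ : ℕ∞) ψ) (x : ℝ) :
    commOp (Aop ℏ) (commOp (Bop ℏ V) (commOp (Bop ℏ V) (Aop ℏ))) ψ x =
      (((iteratedDeriv 2 V x : ℝ) : ℂ)^2
          + ((deriv V x : ℝ) : ℂ) * ((iteratedDeriv 3 V x : ℝ) : ℂ)) * ψ x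
        + 2 * ((deriv V x : ℝ) : ℂ) * ((iteratedDeriv 2 V x : ℝ) : ℂ) * deriv ψ x := by
  have hc : (ℏ : ℂ) ≠ 0 := Complex.ofReal_ne_zero.mpr (ne_of_gt hℏ)
  have hV' : ContDiff ℝ ∞ V := hV.of_le (by simp)
  have hψ' : ContDiff ℝ ∞ ψ := hψ.of_le (by simp)
  have hW := smoothW hV'
  have hW' := sd hW
  have hAψ : ContDiff ℝ ∞ (Aop ℏ ψ) := contDiff_const.mul (si2 hψ')
  show Aop ℏ (commOp (Bop ℏ V) (commOp (Bop ℏ V) (Aop ℏ)) ψ) x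
      - commOp (Bop ℏ V) (commOp (Bop ℏ V) (Aop ℏ)) (Aop ℏ ψ) x = _
  rw [commBBA hc hV' hψ', commBBA hc hV' hAψ]
  simp only [Aop]
  have hrw : (fun t => -(ℏ : ℂ)⁻¹ * (deriv (fun s => ((V s : ℝ) : ℂ)) t) ^ 2 * ψ t)
      = fun t => (-(ℏ : ℂ)⁻¹) * (deriv (fun s => ((V s : ℝ) : ℂ)) t
          * deriv (fun s => ((V s : ℝ) : ℂ)) t * ψ t) := by
    funext t; ring
  rw [hrw, i2cmul (-(ℏ : ℂ)⁻¹)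
    (fun t => deriv (fun s => ((V s : ℝ) : ℂ)) t * deriv (fun s => ((V s : ℝ) : ℂ)) t * ψ t)]
  beta_reduce
  have hmm : (fun t => deriv (fun s => ((V s : ℝ) : ℂ)) t * deriv (fun s => ((V s : ℝ) : ℂ)) t * ψ t)
      = fun t => (fun u => deriv (fun s => ((V s : ℝ) : ℂ)) u * deriv (fun s => ((V s : ℝ) : ℂ)) u) t * ψ t := rfl
  rw [hmm, i2mul (hW'.mul hW') hψ']
  rw [i2mul hW' hW']
  rw [dmul hW' hW']
  beta_reduce
  have h3 : iteratedDeriv 2 (deriv (fun s => ((V s : ℝ) : ℂ)))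
      = iteratedDeriv 3 (fun s => ((V s : ℝ) : ℂ)) := by
    rw [i2, show (3:ℕ) = 2+1 from rfl, iteratedDeriv_succ, i2]
  have h2 : deriv (deriv (fun s => ((V s : ℝ) : ℂ)))
      = iteratedDeriv 2 (fun s => ((V s : ℝ) : ℂ)) := (i2 _).symm
  rw [h3, h2]
  rw [iterW 2 V hV', iterW 3 V hV', derivW hV']
  field_simp
  ring
end

section
/- For every integer k ≥ 1 there exists a family of real coefficients c(m₁,m₂), indexed by pairs of natural numbers with m₁ + m₂ = 2k and 0 ≤ m₂ ≤ k, with c(k,k) = (−1)^k (so in particular the coefficient of the term V^{(k)}·ψ^{(k)} has absolute value 1), such that for every ℏ > 0, every C^∞ potential V : ℝ → ℝ, every C^∞ function ψ : ℝ → ℂ and every x ∈ ℝ, the (k+1)-fold nested commutator satisfies ((ad_A)^k(B) ψ)(x) = ℏ^{k−1} · Σ_{m₁+m₂=2k, 0≤m₂≤k} c(m₁,m₂) · V^{(m₁)}(x) · ψ^{(m₂)}(x), where V^{(m)} and ψ^{(m)} denote m-th derivatives. The coefficients c(m₁,m₂) depend only on k, m₁, m₂ and not on ℏ, V, or ψ.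 -/
open scoped ContDiff

noncomputable def Wc (V : ℝ → ℝ) (n : ℕ) : ℝ → ℂ := fun x => ((iteratedDeriv n V x : ℝ) : ℂ)

section helpers
variable {V : ℝ → ℝ} {ψ : ℝ → ℂ}

lemma smooth_iter {E : Type*} [NormedAddCommGroup E] [NormedSpace ℝ E] {f : ℝ → E}
    (hf : ContDiff ℝ ∞ f) (n : ℕ) : ContDiff ℝ ∞ (iteratedDeriv n f) := by
  rw [iteratedDeriv_eq_iterate]
  exact hf.iterate_deriv n

lemma diff_iter {E : Type*} [NormedAddCommGroup E] [NormedSpace ℝ E] {f : ℝ → E}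
    (hf : ContDiff ℝ ∞ f) (n : ℕ) : Differentiable ℝ (iteratedDeriv n f) :=
  (smooth_iter hf n).differentiable (by simp)

lemma Wc_contDiff (hV : ContDiff ℝ ∞ V) (n : ℕ) : ContDiff ℝ ∞ (Wc V n) :=
  Complex.ofRealCLM.contDiff.comp (smooth_iter hV n)

lemma Wc_diff (hV : ContDiff ℝ ∞ V) (n : ℕ) : Differentiable ℝ (Wc V n) :=
  (Wc_contDiff hV n).differentiable (by simp)

lemma deriv_Wc (hV : ContDiff ℝ ∞ V) (n : ℕ) (x : ℝ) : deriv (Wc V n) x = Wc V (n+1) x := by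
  have h := ((diff_iter hV n x).hasDerivAt).ofReal_comp
  rw [show deriv (Wc V n) x = deriv (fun y => ((iteratedDeriv n V y : ℝ) : ℂ)) x from rfl, h.deriv, Wc, iteratedDeriv_succ]

lemma deriv_iter (hψ : ContDiff ℝ ∞ ψ) (m : ℕ) (x : ℝ) :
    deriv (iteratedDeriv m ψ) x = iteratedDeriv (m+1) ψ x := by
  rw [iteratedDeriv_succ]

lemma key_diff (hV : ContDiff ℝ ∞ V) (hψ : ContDiff ℝ ∞ ψ) (n m : ℕ) :
    Differentiable ℝ (fun y => Wc V n y * iteratedDeriv m ψ y) :=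
  (Wc_diff hV n).mul (diff_iter hψ m)

lemma key_deriv (hV : ContDiff ℝ ∞ V) (hψ : ContDiff ℝ ∞ ψ) (n m : ℕ) (x : ℝ) :
    deriv (fun y => Wc V n y * iteratedDeriv m ψ y) x =
      Wc V (n+1) x * iteratedDeriv m ψ x + Wc V n x * iteratedDeriv (m+1) ψ x := by
  rw [deriv_fun_mul (Wc_diff hV n x) (diff_iter hψ m x), deriv_Wc hV, iteratedDeriv_succ]

lemma iter_const_mul {f : ℝ → ℂ} (hf : ContDiff ℝ ∞ f) (c : ℂ) (n : ℕ) (x : ℝ) :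
    iteratedDeriv n (fun y => c * f y) x = c * iteratedDeriv n f x := by
  have := iteratedDerivWithin_const_smul (Set.mem_univ x) uniqueDiffOn_univ c
    ((hf.of_le (by exact_mod_cast le_top)).contDiffWithinAt (n := n))
  simpa [iteratedDerivWithin_univ, smul_eq_mul, Pi.smul_def] using this

lemma iter_iter {E : Type*} [NormedAddCommGroup E] [NormedSpace ℝ E] (f : ℝ → E) (m n : ℕ) :
    iteratedDeriv m (iteratedDeriv n f) = iteratedDeriv (m + n) f := by
  induction m with
  | zero => simp
  | succ m ih => rw [iteratedDeriv_succ, ih, ← iteratedDeriv_succ]; congr 1; ring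

end helpers

section sum2
variable {V : ℝ → ℝ} {ψ : ℝ → ℂ}

lemma deriv_sum_step (hV : ContDiff ℝ ∞ V) (hψ : ContDiff ℝ ∞ ψ) (K : ℕ) (a : ℕ → ℂ) (p : ℕ → ℕ) :
    deriv (fun y => ∑ m ∈ Finset.range K, a m * (Wc V (p m) y * iteratedDeriv m ψ y)) =
      fun x => ∑ m ∈ Finset.range K, a m *
        (Wc V (p m + 1) x * iteratedDeriv m ψ x + Wc V (p m) x * iteratedDeriv (m+1) ψ x) := by
  funext x
  rw [deriv_fun_sum (fun m _ => ((key_diff hV hψ (p m) m) x).const_mul (a m))]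
  refine Finset.sum_congr rfl fun m _ => ?_
  rw [deriv_const_mul _ ((key_diff hV hψ (p m) m) x), key_deriv hV hψ]

lemma sum_contDiff (hV : ContDiff ℝ ∞ V) (hψ : ContDiff ℝ ∞ ψ) (K : ℕ) (a : ℕ → ℂ) (p : ℕ → ℕ) :
    ContDiff ℝ ∞ (fun y => ∑ m ∈ Finset.range K, a m * (Wc V (p m) y * iteratedDeriv m ψ y)) := by
  apply ContDiff.sum fun m _ => ?_
  exact ContDiff.const_smul (a m) ((Wc_contDiff hV (p m)).mul (smooth_iter hψ m))

lemma iter2_sum (hV : ContDiff ℝ ∞ V) (hψ : ContDiff ℝ ∞ ψ) (K : ℕ) (a : ℕ → ℂ) (p : ℕ → ℕ)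
    (x : ℝ) :
    iteratedDeriv 2 (fun y => ∑ m ∈ Finset.range K, a m * (Wc V (p m) y * iteratedDeriv m ψ y)) x =
    ∑ m ∈ Finset.range K, a m * (Wc V (p m + 2) x * iteratedDeriv m ψ x
      + 2 * (Wc V (p m + 1) x * iteratedDeriv (m+1) ψ x) + Wc V (p m) x * iteratedDeriv (m+2) ψ x)
    := by
  rw [show (2:ℕ) = 1 + 1 from rfl, iteratedDeriv_succ, iteratedDeriv_one,
    deriv_sum_step hV hψ K a p]
  have hdiff : ∀ m, Differentiable ℝ (fun y =>
      Wc V (p m + 1) y * iteratedDeriv m ψ y + Wc V (p m) y * iteratedDeriv (m+1) ψ y) :=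
    fun m => (key_diff hV hψ (p m + 1) m).add (key_diff hV hψ (p m) (m+1))
  rw [deriv_fun_sum (fun m _ => ((hdiff m) x).const_mul (a m))]
  refine Finset.sum_congr rfl fun m _ => ?_
  rw [deriv_const_mul _ ((hdiff m) x),
    deriv_fun_add ((key_diff hV hψ (p m + 1) m) x) ((key_diff hV hψ (p m) (m+1)) x),
    key_deriv hV hψ, key_deriv hV hψ]
  ring

end sum2

/-- Coefficients of the nested commutator expansion. -/
noncomputable def dcoef : ℕ → ℕ → ℝ
  | 0, _ => 0
  | 1, 0 => -(1/2)
  | 1, 1 => -1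
  | 1, _+2 => 0
  | (k+2), 0 => -(1/2) * dcoef (k+1) 0
  | (k+2), (m+1) => -(1/2) * dcoef (k+1) (m+1) - dcoef (k+1) m

lemma dcoef_zero : ∀ k m, k < m → dcoef k m = 0
  | 0, _, _ => by simp [dcoef]
  | 1, 0, h => by omega
  | 1, 1, h => by omega
  | 1, (m+2), _ => by simp [dcoef]
  | (k+2), 0, h => by omega
  | (k+2), (m+1), h => by
      have h1 := dcoef_zero (k+1) (m+1) (by omega)
      have h2 := dcoef_zero (k+1) m (by omega)
      show -(1/2) * dcoef (k+1) (m+1) - dcoef (k+1) m = 0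
      rw [h1, h2]; ring

lemma dcoef_diag : ∀ k, 1 ≤ k → dcoef k k = (-1 : ℝ)^k
  | 0, h => by omega
  | 1, _ => by norm_num [dcoef]
  | (k+2), _ => by
      show -(1/2) * dcoef (k+1) (k+2) - dcoef (k+1) (k+1) = _
      rw [dcoef_zero (k+1) (k+2) (by omega), dcoef_diag (k+1) (by omega), pow_succ]
      ring

lemma sum_shift (N : ℕ) (a b P : ℕ → ℂ) (ha : a N = 0)
    (hb0 : b 0 = -(1/2) * a 0) (hbS : ∀ m, b (m+1) = -(1/2) * a (m+1) - a m) :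
    ∑ m ∈ Finset.range (N+1), b m * P m =
      ∑ m ∈ Finset.range N, a m * (-(1/2) * P m - P (m+1)) := by
  rw [Finset.sum_range_succ' (fun m => b m * P m) N]
  have e1 : ∑ m ∈ Finset.range N, b (m+1) * P (m+1)
      = ∑ m ∈ Finset.range N, (-(1/2) * (a (m+1) * P (m+1)) - a m * P (m+1)) := by
    refine Finset.sum_congr rfl fun m _ => ?_; rw [hbS]; ring
  have e2 : ∑ m ∈ Finset.range N, a m * (-(1/2) * P m - P (m+1))
      = -(1/2) * (∑ m ∈ Finset.range N, a m * P m)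
        - ∑ m ∈ Finset.range N, a m * P (m+1) := by
    rw [Finset.mul_sum, ← Finset.sum_sub_distrib]
    refine Finset.sum_congr rfl fun m _ => ?_; ring
  have e3 : (∑ m ∈ Finset.range N, a m * P m)
      = ∑ m ∈ Finset.range N, a (m+1) * P (m+1) + a 0 * P 0 := by
    have h1 := Finset.sum_range_succ' (fun m => a m * P m) N
    rw [Finset.sum_range_succ (fun m => a m * P m) N, ha] at h1
    simpa using h1
  rw [e1, Finset.sum_sub_distrib, ← Finset.mul_sum, e2, e3, hb0]
  ring

theorem main_aux (ℏ : ℝ) (hℏ : 0 < ℏ) (V : ℝ → ℝ) (hV : ContDiff ℝ ∞ V) :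
    ∀ k, 1 ≤ k → ∀ (ψ : ℝ → ℂ), ContDiff ℝ ∞ ψ → ∀ x : ℝ,
      ((fun T => commOp (Aop ℏ) T)^[k] (Bop ℏ V)) ψ x =
        ((ℏ ^ (k - 1) : ℝ) : ℂ) * ∑ m ∈ Finset.range (k + 1),
          ((dcoef k m : ℝ) : ℂ) * (Wc V (2 * k - m) x * iteratedDeriv m ψ x) := by
  have hne : (ℏ : ℂ) ≠ 0 := by exact_mod_cast hℏ.ne'
  intro k hk
  induction k, hk using Nat.le_induction with
  | base =>
    intro ψ hψ x
    simp only [Function.iterate_one, commOp]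
    have hBψ : Bop ℏ V ψ = fun y =>
        ((ℏ⁻¹ : ℝ) : ℂ) * ∑ m ∈ Finset.range 1, (1:ℂ) * (Wc V ((fun _ => 0) m) y * iteratedDeriv m ψ y) := by
      funext y
      simp [Bop, Wc, mul_assoc]
    have h1 : Aop ℏ (Bop ℏ V ψ) x = -((ℏ:ℂ)/2) * (((ℏ⁻¹:ℝ):ℂ) *
        ∑ m ∈ Finset.range 1, (1:ℂ) * (Wc V ((fun _ => 0) m + 2) x * iteratedDeriv m ψ x
          + 2 * (Wc V ((fun _ => 0) m + 1) x * iteratedDeriv (m+1) ψ x)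
          + Wc V ((fun _ => 0) m) x * iteratedDeriv (m+2) ψ x)) := by
      simp only [Aop]
      rw [hBψ, iter_const_mul (sum_contDiff hV hψ 1 (fun _ => 1) (fun _ => 0)) _ 2 x,
        iter2_sum hV hψ 1 (fun _ => 1) (fun _ => 0) x]
    rw [h1]
    simp only [Bop, Aop, Finset.sum_range_one, Finset.sum_range_succ, Finset.sum_range_one]
    norm_num [Wc, dcoef]
    field_simp
    ring
  | succ k hk ih =>
    intro ψ hψ x
    obtain ⟨j, rfl⟩ : ∃ j, k = j + 1 := ⟨k - 1, by omega⟩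
    set k := j + 1 with hkdef
    rw [Function.iterate_succ_apply']
    show commOp (Aop ℏ) ((fun T => commOp (Aop ℏ) T)^[k] (Bop ℏ V)) ψ x = _
    set adk := (fun T => commOp (Aop ℏ) T)^[k] (Bop ℏ V) with hadk
    simp only [commOp]
    set C : ℂ := ((ℏ ^ (k-1) : ℝ) : ℂ) with hC
    have hfun : adk ψ = fun y => C * ∑ m ∈ Finset.range (k+1),
        ((dcoef k m : ℝ) : ℂ) * (Wc V (2*k - m) y * iteratedDeriv m ψ y) := funext (ih ψ hψ)
    have hAψ : ContDiff ℝ ∞ (Aop ℏ ψ) := by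
      show ContDiff ℝ ∞ fun y => -((ℏ:ℂ)/2) * iteratedDeriv 2 ψ y
      exact contDiff_const.mul (smooth_iter hψ 2)
    have hterm2 : adk (Aop ℏ ψ) x = C * ∑ m ∈ Finset.range (k+1),
        ((dcoef k m : ℝ) : ℂ) * (Wc V (2*k - m) x * (-((ℏ:ℂ)/2) * iteratedDeriv (m+2) ψ x)) := by
      rw [ih (Aop ℏ ψ) hAψ x]
      congr 1
      refine Finset.sum_congr rfl fun m _ => ?_
      have hiter : iteratedDeriv m (Aop ℏ ψ) x = -((ℏ:ℂ)/2) * iteratedDeriv (m+2) ψ x := by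
        have hA : Aop ℏ ψ = fun y => -((ℏ:ℂ)/2) * iteratedDeriv 2 ψ y := rfl
        rw [hA, iter_const_mul (smooth_iter hψ 2), iter_iter]
      rw [hiter]
    have h2s := iter2_sum hV hψ (k+1) (fun m => ((dcoef k m : ℝ) : ℂ)) (fun m => 2*k - m) x
    have hterm1 : Aop ℏ (adk ψ) x = -((ℏ:ℂ)/2) * (C * ∑ m ∈ Finset.range (k+1),
        ((dcoef k m : ℝ) : ℂ) * (Wc V (2*k - m + 2) x * iteratedDeriv m ψ x
          + 2 * (Wc V (2*k - m + 1) x * iteratedDeriv (m+1) ψ x)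
          + Wc V (2*k - m) x * iteratedDeriv (m+2) ψ x)) := by
      show -((ℏ:ℂ)/2) * iteratedDeriv 2 (adk ψ) x = _
      rw [hfun, iter_const_mul (sum_contDiff hV hψ (k+1)
        (fun m => ((dcoef k m : ℝ) : ℂ)) (fun m => 2*k - m)) C 2 x, h2s]
    rw [hterm1, hterm2]
    have hzero : ((dcoef k (k+1) : ℝ) : ℂ) = 0 := by
      rw [dcoef_zero k (k+1) (by omega)]; norm_num
    have hsum := sum_shift (k+1) (fun m => ((dcoef k m : ℝ) : ℂ))
      (fun m => ((dcoef (k+1) m : ℝ) : ℂ))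
      (fun m => Wc V (2*(k+1) - m) x * iteratedDeriv m ψ x)
      hzero (by push_cast [hkdef, dcoef]; ring) (fun m => by push_cast [hkdef, dcoef]; ring)
    have hk1 : (k + 1) - 1 = k := rfl
    rw [hk1]
    rw [hsum]
    simp only [Finset.mul_sum]
    rw [← Finset.sum_sub_distrib]
    refine Finset.sum_congr rfl fun m hm => ?_
    have hm' : m ≤ k := by simpa using Nat.lt_succ_iff.mp (Finset.mem_range.mp hm)
    rw [show 2*k - m + 2 = 2*(k+1) - m by omega,
      show 2*k - m + 1 = 2*(k+1) - (m+1) by omega,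
      show 2*k - m = 2*(k+1) - (m+2) by omega]
    have hCpow : ((ℏ ^ k : ℝ) : ℂ) = (ℏ:ℂ) * C := by
      rw [hC, hkdef]
      push_cast
      ring
    rw [hCpow]
    ring

theorem nested_commutator_adA_pow_B (k : ℕ) (hk : 1 ≤ k) :
    ∃ c : ℕ → ℕ → ℝ, c k k = (-1 : ℝ)^k ∧
      ∀ (ℏ : ℝ), 0 < ℏ → ∀ (V : ℝ → ℝ), ContDiff ℝ (⊤ : ℕ∞) V →
        ∀ (ψ : ℝ → ℂ), ContDiff ℝ (⊤ : ℕ∞) ψ → ∀ x : ℝ,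
          ((fun T => commOp (Aop ℏ) T)^[k] (Bop ℏ V)) ψ x =
            ((ℏ ^ (k - 1) : ℝ) : ℂ) *
              ∑ m₂ ∈ Finset.range (k + 1),
                ((c (2 * k - m₂) m₂ : ℝ) : ℂ) *
                  ((iteratedDeriv (2 * k - m₂) V x : ℝ) : ℂ) * iteratedDeriv m₂ ψ x := by
  refine ⟨fun _ m => dcoef k m, dcoef_diag k hk, ?_⟩
  intro ℏ hℏ V hV ψ hψ x
  rw [main_aux ℏ hℏ V (hV.of_le (by simp)) k hk ψ (hψ.of_le (by simp)) x]
  congr 1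
  refine Finset.sum_congr rfl fun m _ => ?_
  rw [mul_assoc]
  rfl
end

section
/- Let ε, ℏ, L, t, C be positive real numbers and let p ≥ 1 be an integer. Define the step size Δt = ( ε·ℏ/(2·C·√L·t) )^{1/p}, the number of time steps n = t/Δt, and the grid size Δx = ε·L·ℏ/(2·C·√L·n). Then: (i) n = (2·C)^{1/p}·L^{1/(2p)}·t^{1+1/p}/(ε·ℏ)^{1/p}; (ii) the global error expression of a p-th order splitting scheme satisfies C·√L·n·( Δx/(L·ℏ) + Δt^{p+1}/ℏ ) = ε; and (iii) the number of spatial grid points satisfies L/Δx = (2·C)^{1+1/p}·L^{1/2+1/(2p)}·t^{1+1/p}/( ε^{1+1/p}·ℏ^{1+1/p} ). In particular, as p grows, the number of time steps n approaches a scaling that is essentially independent of ε and ℏ (scaling as (ε·ℏ)^{−1/p}). -/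
theorem pth_order_splitting_meshing_strategy
    (ε ℏ L t C : ℝ) (hε : 0 < ε) (hℏ : 0 < ℏ) (hL : 0 < L) (ht : 0 < t) (hC : 0 < C)
    (p : ℕ) (hp : 1 ≤ p)
    (Δt Δx n : ℝ)
    (hΔt : Δt = (ε * ℏ / (2 * C * Real.sqrt L * t)) ^ ((1:ℝ)/(p:ℝ)))
    (hn : n = t / Δt)
    (hΔx : Δx = ε * L * ℏ / (2 * C * Real.sqrt L * n)) :
    n = (2 * C) ^ ((1:ℝ)/(p:ℝ)) * L ^ (1/(2*(p:ℝ))) * t ^ (1 + 1/(p:ℝ))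
        / (ε * ℏ) ^ ((1:ℝ)/(p:ℝ)) ∧
    C * Real.sqrt L * n * (Δx / (L * ℏ) + Δt ^ (p + 1) / ℏ) = ε ∧
    L / Δx = (2 * C) ^ (1 + 1/(p:ℝ)) * L ^ ((1:ℝ)/2 + 1/(2*(p:ℝ))) * t ^ (1 + 1/(p:ℝ))
        / (ε ^ (1 + 1/(p:ℝ)) * ℏ ^ (1 + 1/(p:ℝ))) := by
  have hs : 0 < Real.sqrt L := Real.sqrt_pos.mpr hL
  set s := Real.sqrt L with hsdef
  have hpR : (0:ℝ) < (p:ℝ) := by exact_mod_cast hp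
  have ha : 0 < ε * ℏ / (2 * C * s * t) := by positivity
  have hΔtpos : 0 < Δt := by rw [hΔt]; positivity
  have hnpos : 0 < n := by rw [hn]; positivity
  -- Δt ^ p = a
  have hΔtp : Δt ^ p = ε * ℏ / (2 * C * s * t) := by
    rw [hΔt, ← Real.rpow_natCast (_ ^ ((1:ℝ)/(p:ℝ))) p, ← Real.rpow_mul ha.le,
      one_div_mul_cancel (ne_of_gt hpR), Real.rpow_one]
  -- part (i)
  have hsL : s = L ^ ((1:ℝ)/2) := by rw [hsdef, Real.sqrt_eq_rpow]
  have hi : n = (2 * C) ^ ((1:ℝ)/(p:ℝ)) * L ^ (1/(2*(p:ℝ))) * t ^ (1 + 1/(p:ℝ))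
      / (ε * ℏ) ^ ((1:ℝ)/(p:ℝ)) := by
    have h1 : n = t * (2 * C * s * t / (ε * ℏ)) ^ ((1:ℝ)/(p:ℝ)) := by
      rw [hn, hΔt, div_eq_mul_inv, ← Real.inv_rpow ha.le, inv_div]
    rw [h1]
    have h2 : (2 * C * s * t / (ε * ℏ)) ^ ((1:ℝ)/(p:ℝ))
        = (2*C) ^ ((1:ℝ)/(p:ℝ)) * s ^ ((1:ℝ)/(p:ℝ)) * t ^ ((1:ℝ)/(p:ℝ)) / (ε*ℏ) ^ ((1:ℝ)/(p:ℝ)) := by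
      rw [Real.div_rpow (by positivity) (by positivity), Real.mul_rpow (by positivity) ht.le,
        Real.mul_rpow (by positivity) hs.le]
    have h3 : s ^ ((1:ℝ)/(p:ℝ)) = L ^ (1/(2*(p:ℝ))) := by
      rw [hsL, ← Real.rpow_mul hL.le]
      ring_nf
    have h4 : t * t ^ ((1:ℝ)/(p:ℝ)) = t ^ (1 + 1/(p:ℝ)) := by
      rw [Real.rpow_add ht, Real.rpow_one]
    rw [h2, h3]
    rw [← h4]
    ring
  refine ⟨hi, ?_, ?_⟩
  · -- part (ii)
    have hΔteq : Δt = t / n := by rw [hn]; field_simp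
    rw [hΔx, pow_succ, hΔtp, hΔteq]
    field_simp
    ring
  · -- part (iii)
    have h5 : L / Δx = 2 * C * s * n / (ε * ℏ) := by
      rw [hΔx]
      field_simp
    rw [h5, hi]
    have h6 : (2*C) * (2*C) ^ ((1:ℝ)/(p:ℝ)) = (2*C) ^ (1 + 1/(p:ℝ)) := by
      rw [Real.rpow_add (by positivity), Real.rpow_one]
    have h7 : s * L ^ (1/(2*(p:ℝ))) = L ^ ((1:ℝ)/2 + 1/(2*(p:ℝ))) := by
      rw [hsL, ← Real.rpow_add hL]
    have h8 : (ε*ℏ) ^ ((1:ℝ)/(p:ℝ)) * (ε*ℏ) = ε ^ (1 + 1/(p:ℝ)) * ℏ ^ (1 + 1/(p:ℝ)) := by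
      rw [Real.mul_rpow hε.le hℏ.le, Real.rpow_add hε, Real.rpow_add hℏ,
        Real.rpow_one, Real.rpow_one]
      ring
    rw [← h6, ← h7, ← h8]
    have hpow : (0:ℝ) < (ε*ℏ) ^ ((1:ℝ)/(p:ℝ)) := by positivity
    field_simp
end

section
/- Let ε, ℏ, L, t, C be positive real numbers, let ℓ ≥ 1 be an integer, and assume ℏ ≤ ( ε/(3·C·√L·t) )^{1/2} (the smallness condition on ℏ relative to √(ε/t)). Define the step size Δt = ( ε/(3·C·√L·t) )^{1/2} — note Δt is chosen independently of ℏ — the number of time steps n = t/Δt, and the grid size Δx = ℏ·L·( ε/(3·C·√L·n) )^{1/ℓ}. Then: (i) n = (3·C)^{1/2}·L^{1/4}·t^{3/2}/ε^{1/2}, independent of ℏ; (ii) the observable-error expression satisfies C·√L·n·( (Δx/(ℏ·L))^ℓ + Δt³ + Δt·ℏ² ) ≤ ε; and (iii) the number of spatial grid points satisfies L/Δx = ℏ⁻¹·( (3·C)^{3/2}·L^{3/4}·t^{3/2}/ε^{3/2} )^{1/ℓ}, so the number of qubits m = ⌈log₂(L/Δx)⌉ satisfies m ≤ log₂( ℏ⁻¹·(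 (3·C)^{3/2}·L^{3/4}·t^{3/2}/ε^{3/2} )^{1/ℓ} ) + 1. In particular, when only physical observables are required, the number of time steps scales as ε^{−1/2} independently of ℏ. -/
theorem observable_meshing_strategy
    (ε ℏ L t C : ℝ) (hε : 0 < ε) (hℏ : 0 < ℏ) (hL : 0 < L) (ht : 0 < t) (hC : 0 < C)
    (ℓ : ℕ) (hℓ : 1 ≤ ℓ)
    (hℏsmall : ℏ ≤ Real.sqrt (ε / (3 * C * Real.sqrt L * t)))
    (Δt Δx n : ℝ)
    (hΔt : Δt = Real.sqrt (ε / (3 * C * Real.sqrt L * t)))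
    (hn : n = t / Δt)
    (hΔx : Δx = ℏ * L * (ε / (3 * C * Real.sqrt L * n)) ^ ((1:ℝ)/(ℓ:ℝ))) :
    n = Real.sqrt (3 * C) * L ^ ((1:ℝ)/4) * t ^ ((3:ℝ)/2) / ε ^ ((1:ℝ)/2) ∧
    C * Real.sqrt L * n * ((Δx / (ℏ * L)) ^ ℓ + Δt ^ 3 + Δt * ℏ ^ 2) ≤ ε ∧
    L / Δx = ℏ⁻¹ *
      ((3 * C) ^ ((3:ℝ)/2) * L ^ ((3:ℝ)/4) * t ^ ((3:ℝ)/2) / ε ^ ((3:ℝ)/2)) ^ ((1:ℝ)/(ℓ:ℝ)) ∧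
    (⌈Real.logb 2 (L / Δx)⌉ : ℝ) ≤
      Real.logb 2 (ℏ⁻¹ *
        ((3 * C) ^ ((3:ℝ)/2) * L ^ ((3:ℝ)/4) * t ^ ((3:ℝ)/2) / ε ^ ((3:ℝ)/2))
          ^ ((1:ℝ)/(ℓ:ℝ))) + 1 := by
  have hsL : 0 < Real.sqrt L := Real.sqrt_pos.mpr hL
  have hK : 0 < 3 * C * Real.sqrt L * t := by positivity
  have hεK : 0 < ε / (3 * C * Real.sqrt L * t) := by positivity
  have hΔtpos : 0 < Δt := hΔt ▸ Real.sqrt_pos.mpr hεK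
  have hnpos : 0 < n := hn ▸ div_pos ht hΔtpos
  have hΔt2 : Δt ^ 2 = ε / (3 * C * Real.sqrt L * t) := by
    rw [hΔt, Real.sq_sqrt hεK.le]
  have hnt : n * Δt = t := by rw [hn]; field_simp
  -- part (i)
  have hn2 : n ^ 2 = 3 * C * Real.sqrt L * t ^ 3 / ε := by
    rw [hn, div_pow, hΔt2]
    field_simp
  have e1 : (L ^ ((1:ℝ)/4)) ^ (2:ℕ) = Real.sqrt L := by
    rw [← Real.rpow_natCast (L ^ ((1:ℝ)/4)) 2, ← Real.rpow_mul hL.le,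
      Real.sqrt_eq_rpow]
    norm_num
  have e2 : (t ^ ((3:ℝ)/2)) ^ (2:ℕ) = t ^ 3 := by
    rw [← Real.rpow_natCast (t ^ ((3:ℝ)/2)) 2, ← Real.rpow_mul ht.le,
      ← Real.rpow_natCast t 3]
    norm_num
  have e3 : (ε ^ ((1:ℝ)/2)) ^ (2:ℕ) = ε := by
    rw [← Real.rpow_natCast (ε ^ ((1:ℝ)/2)) 2, ← Real.rpow_mul hε.le]
    norm_num
  have hR2 : (Real.sqrt (3 * C) * L ^ ((1:ℝ)/4) * t ^ ((3:ℝ)/2) / ε ^ ((1:ℝ)/2)) ^ 2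
      = 3 * C * Real.sqrt L * t ^ 3 / ε := by
    rw [div_pow, mul_pow, mul_pow, Real.sq_sqrt (by positivity : (0:ℝ) ≤ 3 * C), e1, e2, e3]
  have part1 : n = Real.sqrt (3 * C) * L ^ ((1:ℝ)/4) * t ^ ((3:ℝ)/2) / ε ^ ((1:ℝ)/2) := by
    have h1 : n = Real.sqrt (n ^ 2) := (Real.sqrt_sq hnpos.le).symm
    have h2 : Real.sqrt (3 * C) * L ^ ((1:ℝ)/4) * t ^ ((3:ℝ)/2) / ε ^ ((1:ℝ)/2)
        = Real.sqrt ((Real.sqrt (3 * C) * L ^ ((1:ℝ)/4) * t ^ ((3:ℝ)/2) / ε ^ ((1:ℝ)/2)) ^ 2) :=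
      (Real.sqrt_sq (by positivity)).symm
    rw [h1, h2, hn2, hR2]
  -- part (ii)
  have hM : 0 < ε / (3 * C * Real.sqrt L * n) := by positivity
  have hℓ0 : (ℓ:ℝ) ≠ 0 := Nat.cast_ne_zero.mpr (by omega)
  have hpow : (Δx / (ℏ * L)) ^ ℓ = ε / (3 * C * Real.sqrt L * n) := by
    rw [hΔx]
    have h3 : ℏ * L * (ε / (3 * C * Real.sqrt L * n)) ^ ((1:ℝ)/(ℓ:ℝ)) / (ℏ * L)
        = (ε / (3 * C * Real.sqrt L * n)) ^ ((1:ℝ)/(ℓ:ℝ)) := by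
      field_simp
    rw [h3, ← Real.rpow_natCast ((ε / (3 * C * Real.sqrt L * n)) ^ ((1:ℝ)/(ℓ:ℝ))) ℓ,
      ← Real.rpow_mul hM.le]
    rw [show (1:ℝ)/(ℓ:ℝ) * (ℓ:ℝ) = 1 by field_simp, Real.rpow_one]
  have hA : C * Real.sqrt L * n * (ε / (3 * C * Real.sqrt L * n)) = ε / 3 := by
    field_simp
  have hB : C * Real.sqrt L * n * Δt ^ 3 = ε / 3 := by
    have : C * Real.sqrt L * n * Δt ^ 3 = C * Real.sqrt L * (n * Δt) * Δt ^ 2 := by ring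
    rw [this, hnt, hΔt2]
    field_simp
  have hℏΔt : ℏ ≤ Δt := hΔt ▸ hℏsmall
  have hCc : C * Real.sqrt L * n * (Δt * ℏ ^ 2) ≤ ε / 3 := by
    have h4 : Δt * ℏ ^ 2 ≤ Δt ^ 3 := by
      have h5 : ℏ ^ 2 ≤ Δt ^ 2 := by nlinarith
      calc Δt * ℏ ^ 2 ≤ Δt * Δt ^ 2 := mul_le_mul_of_nonneg_left h5 hΔtpos.le
        _ = Δt ^ 3 := by ring
    calc C * Real.sqrt L * n * (Δt * ℏ ^ 2) ≤ C * Real.sqrt L * n * Δt ^ 3 :=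
          mul_le_mul_of_nonneg_left h4 (by positivity)
      _ = ε / 3 := hB
  have part2 : C * Real.sqrt L * n * ((Δx / (ℏ * L)) ^ ℓ + Δt ^ 3 + Δt * ℏ ^ 2) ≤ ε := by
    rw [hpow]
    have expand : C * Real.sqrt L * n * (ε / (3 * C * Real.sqrt L * n) + Δt ^ 3 + Δt * ℏ ^ 2)
        = C * Real.sqrt L * n * (ε / (3 * C * Real.sqrt L * n))
          + C * Real.sqrt L * n * Δt ^ 3 + C * Real.sqrt L * n * (Δt * ℏ ^ 2) := by ring
    rw [expand, hA, hB]
    linarith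
  -- part (iii)
  have hA3 : (3 * C) ^ ((3:ℝ)/2) = (3 * C) * Real.sqrt (3 * C) := by
    rw [show ((3:ℝ)/2) = 1 + 1/2 by norm_num,
      Real.rpow_add (by positivity : (0:ℝ) < 3 * C), Real.rpow_one, Real.sqrt_eq_rpow]
  have hL34 : L ^ ((3:ℝ)/4) = Real.sqrt L * L ^ ((1:ℝ)/4) := by
    rw [show ((3:ℝ)/4) = 1/2 + 1/4 by norm_num, Real.rpow_add hL, Real.sqrt_eq_rpow]
  have hε32 : ε ^ ((3:ℝ)/2) = ε * ε ^ ((1:ℝ)/2) := by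
    rw [show ((3:ℝ)/2) = 1 + 1/2 by norm_num, Real.rpow_add hε, Real.rpow_one]
  have hε12 : (0:ℝ) < ε ^ ((1:ℝ)/2) := Real.rpow_pos_of_pos hε _
  have hX : (3 * C) ^ ((3:ℝ)/2) * L ^ ((3:ℝ)/4) * t ^ ((3:ℝ)/2) / ε ^ ((3:ℝ)/2)
      = (ε / (3 * C * Real.sqrt L * n))⁻¹ := by
    rw [hA3, hL34, hε32, part1]
    rw [inv_div]
    field_simp
  have part3 : L / Δx = ℏ⁻¹ *
      ((3 * C) ^ ((3:ℝ)/2) * L ^ ((3:ℝ)/4) * t ^ ((3:ℝ)/2) / ε ^ ((3:ℝ)/2)) ^ ((1:ℝ)/(ℓ:ℝ)) := by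
    rw [hX, hΔx, Real.inv_rpow hM.le]
    have hMp : 0 < (ε / (3 * C * Real.sqrt L * n)) ^ ((1:ℝ)/(ℓ:ℝ)) :=
      Real.rpow_pos_of_pos hM _
    field_simp
  refine ⟨part1, part2, part3, ?_⟩
  rw [← part3]
  exact (Int.ceil_lt_add_one _).le
end

section
/- Let ε, ℏ, L, t, C be positive real numbers, let d ≥ 1 and ℓ ≥ 1 be integers, and assume ℏ ≤ ( ε/(3·C·L^{d/2}·t) )^{1/2}. Define the step size Δt = ( ε/(3·C·L^{d/2}·t) )^{1/2} — independent of ℏ — the number of time steps n = t/Δt, and the grid size Δx = ℏ·L·( ε/(3·C·L^{d/2}·n) )^{1/ℓ}. Then: (i) n = (3·C)^{1/2}·L^{d/4}·t^{3/2}/ε^{1/2}, independent of ℏ; (ii) the d-dimensional observable-error expression satisfies C·L^{d/2}·n·( (Δx/(ℏ·L))^ℓ + Δt³ + Δt·ℏ² ) ≤ ε; and (iii) the number of grid points per dimension satisfies L/Δx = ℏ⁻¹·( 3·C·L^{d/2}·n/ε )^{1/ℓ}, so the total number of qubits m = d·⌈log₂(L/Δx)⌉ satisfies m ≤ d·( log₂(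 ℏ⁻¹·( 3·C·L^{d/2}·n/ε )^{1/ℓ} ) + 1 ): the qubit count grows only linearly in the dimension d and logarithmically in ℏ⁻¹, whereas a classical grid would need (L/Δx)^d points, growing exponentially in d. -/
theorem observable_meshing_strategy_high_dim
    (ε ℏ L t C : ℝ) (hε : 0 < ε) (hℏ : 0 < ℏ) (hL : 0 < L) (ht : 0 < t) (hC : 0 < C)
    (d ℓ : ℕ) (hd : 1 ≤ d) (hℓ : 1 ≤ ℓ)
    (hℏsmall : ℏ ≤ Real.sqrt (ε / (3 * C * L ^ ((d:ℝ)/2) * t)))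
    (Δt Δx n : ℝ)
    (hΔt : Δt = Real.sqrt (ε / (3 * C * L ^ ((d:ℝ)/2) * t)))
    (hn : n = t / Δt)
    (hΔx : Δx = ℏ * L * (ε / (3 * C * L ^ ((d:ℝ)/2) * n)) ^ ((1:ℝ)/(ℓ:ℝ))) :
    n = Real.sqrt (3 * C) * L ^ ((d:ℝ)/4) * t ^ ((3:ℝ)/2) / ε ^ ((1:ℝ)/2) ∧
    C * L ^ ((d:ℝ)/2) * n * ((Δx / (ℏ * L)) ^ ℓ + Δt ^ 3 + Δt * ℏ ^ 2) ≤ ε ∧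
    L / Δx = ℏ⁻¹ * (3 * C * L ^ ((d:ℝ)/2) * n / ε) ^ ((1:ℝ)/(ℓ:ℝ)) ∧
    ((d * ⌈Real.logb 2 (L / Δx)⌉ : ℤ) : ℝ) ≤
      (d : ℝ) * (Real.logb 2 (ℏ⁻¹ * (3 * C * L ^ ((d:ℝ)/2) * n / ε) ^ ((1:ℝ)/(ℓ:ℝ))) + 1) := by
  have hLd : (0:ℝ) < L ^ ((d:ℝ)/2) := Real.rpow_pos_of_pos hL _
  have hK : (0:ℝ) < 3 * C * L ^ ((d:ℝ)/2) * t := by positivity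
  have hεK : (0:ℝ) < ε / (3 * C * L ^ ((d:ℝ)/2) * t) := div_pos hε hK
  have hΔtpos : 0 < Δt := hΔt ▸ Real.sqrt_pos.mpr hεK
  have hΔtsq : Δt ^ 2 = ε / (3 * C * L ^ ((d:ℝ)/2) * t) := by
    rw [hΔt, Real.sq_sqrt hεK.le]
  have hℏΔt : ℏ ≤ Δt := hΔt ▸ hℏsmall
  have hnpos : 0 < n := hn ▸ div_pos ht hΔtpos
  have hℓR : (0:ℝ) < (ℓ:ℝ) := by exact_mod_cast hℓ
  have hx : (0:ℝ) < ε / (3 * C * L ^ ((d:ℝ)/2) * n) := by positivity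
  have hxr : (0:ℝ) < (ε / (3 * C * L ^ ((d:ℝ)/2) * n)) ^ ((1:ℝ)/(ℓ:ℝ)) :=
    Real.rpow_pos_of_pos hx _
  -- key: (Δx/(ℏL))^ℓ = ε/(3C L^(d/2) n)
  have hkey : (Δx / (ℏ * L)) ^ ℓ = ε / (3 * C * L ^ ((d:ℝ)/2) * n) := by
    have h1 : Δx / (ℏ * L) = (ε / (3 * C * L ^ ((d:ℝ)/2) * n)) ^ ((1:ℝ)/(ℓ:ℝ)) := by
      rw [hΔx]; field_simp
    rw [h1, ← Real.rpow_natCast _ ℓ, ← Real.rpow_mul hx.le,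
      one_div, inv_mul_cancel₀ hℓR.ne', Real.rpow_one]
  -- part (iii)
  have hiii : L / Δx = ℏ⁻¹ * (3 * C * L ^ ((d:ℝ)/2) * n / ε) ^ ((1:ℝ)/(ℓ:ℝ)) := by
    have hinv : 3 * C * L ^ ((d:ℝ)/2) * n / ε = (ε / (3 * C * L ^ ((d:ℝ)/2) * n))⁻¹ := by
      rw [inv_div]
    rw [hΔx, hinv, Real.inv_rpow hx.le]
    field_simp
  refine ⟨?_, ?_, hiii, ?_⟩
  · -- part (i)
    have h1 : Real.sqrt (L ^ ((d:ℝ)/2)) = L ^ ((d:ℝ)/4) := by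
      rw [Real.sqrt_eq_rpow, ← Real.rpow_mul hL.le]
      congr 1
      ring
    have h2 : t ^ ((3:ℝ)/2) = t * Real.sqrt t := by
      rw [show (3:ℝ)/2 = 1 + 1/2 by norm_num, Real.rpow_add ht, Real.rpow_one,
        Real.sqrt_eq_rpow]
    have h3 : ε ^ ((1:ℝ)/2) = Real.sqrt ε := (Real.sqrt_eq_rpow ε).symm
    rw [hn, hΔt, Real.sqrt_div hε.le, Real.sqrt_mul (by positivity) t,
      Real.sqrt_mul (by positivity), h1, h2, h3]
    have hsε : 0 < Real.sqrt ε := Real.sqrt_pos.mpr hε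
    have hs3C : 0 < Real.sqrt (3 * C) := Real.sqrt_pos.mpr (by positivity)
    have hst : 0 < Real.sqrt t := Real.sqrt_pos.mpr ht
    field_simp
  · -- part (ii)
    have e1 : C * L ^ ((d:ℝ)/2) * n * (Δx / (ℏ * L)) ^ ℓ = ε / 3 := by
      rw [hkey]; field_simp
    have e2 : C * L ^ ((d:ℝ)/2) * n * Δt ^ 3 = ε / 3 := by
      have : n * Δt ^ 3 = t * Δt ^ 2 := by
        rw [hn]; field_simp
      rw [show C * L ^ ((d:ℝ)/2) * n * Δt ^ 3 = C * L ^ ((d:ℝ)/2) * (n * Δt ^ 3) by ring,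
        this, hΔtsq]
      field_simp
    have e3 : C * L ^ ((d:ℝ)/2) * n * (Δt * ℏ ^ 2) ≤ ε / 3 := by
      have hsq : ℏ ^ 2 ≤ Δt ^ 2 := by nlinarith
      have hle : Δt * ℏ ^ 2 ≤ Δt ^ 3 := by nlinarith
      calc C * L ^ ((d:ℝ)/2) * n * (Δt * ℏ ^ 2)
          ≤ C * L ^ ((d:ℝ)/2) * n * Δt ^ 3 := by
            apply mul_le_mul_of_nonneg_left hle (by positivity)
        _ = ε / 3 := e2
    calc C * L ^ ((d:ℝ)/2) * n * ((Δx / (ℏ * L)) ^ ℓ + Δt ^ 3 + Δt * ℏ ^ 2)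
        = C * L ^ ((d:ℝ)/2) * n * (Δx / (ℏ * L)) ^ ℓ
          + C * L ^ ((d:ℝ)/2) * n * Δt ^ 3
          + C * L ^ ((d:ℝ)/2) * n * (Δt * ℏ ^ 2) := by ring
      _ ≤ ε / 3 + ε / 3 + ε / 3 := by rw [e1, e2]; linarith [e3]
      _ = ε := by ring
  · -- part (iv)
    rw [hiii]
    push_cast
    have := (Int.ceil_lt_add_one
      (Real.logb 2 (ℏ⁻¹ * (3 * C * L ^ ((d:ℝ)/2) * n / ε) ^ ((1:ℝ)/(ℓ:ℝ))))).le
    have hd0 : (0:ℝ) ≤ (d:ℝ) := by positivity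
    exact mul_le_mul_of_nonneg_left this hd0
end
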